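/- arXiv:1110.0189 — 2 statements merged into one kernel-verified Lean document; each statement's English description precedes it below -/
import Mathlib

section
/- For every n and k, the number of Fibonacci words of length n (binary words with no two consecutive ones) with exactly k descents equals the number of binary words of length n of the form 1^{m_0} 2^{k + n_0 − 1} 1 2^{n_1 − 1} ⋯ 1 2^{n_{k−1} − 1} 1 2^{n_k} (m_0 ∈ {0,1}, n_0,…,n_{k−1} ≥ 1, n_k ≥ 0) with exactly k excedances. -/
/-- Count the leading letters of a list equal to `a`; return the count and the rest. -/
def leadCount (a : ℕ) : List ℕ → ℕ × List ℕ
  | [] => (0, [])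
  | b :: rest =>
    if b = a then
      let p := leadCount a rest
      (p.1 + 1, p.2)
    else (0, b :: rest)

def blocksAux : ℕ → List ℕ → List (ℕ × ℕ)
  | 0, _ => []
  | _, [] => []
  | fuel + 1, w =>
    let p := leadCount 1 w
    let q := leadCount 2 p.2
    (p.1, q.1) :: blocksAux fuel q.2

/-- The descent-block decomposition `[(m₀,n₀),…,(m_d,n_d)]` of a binary word
`1^{m₀} 2^{n₀} ⋯ 1^{m_d} 2^{n_d}`. -/
def blocks (w : List ℕ) : List (ℕ × ℕ) := blocksAux w.length w

/-- The word `1^{m₀} 2^{n₀} ⋯ 1^{m_d} 2^{n_d}` determined by blocks. -/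
def blockWord (bs : List (ℕ × ℕ)) : List ℕ :=
  bs.flatMap fun p => List.replicate p.1 1 ++ List.replicate p.2 2

/-- `[(m₀,n₀),…,(m_d,n_d)]` is a valid descent-block decomposition:
`m_i > 0` for `1 ≤ i ≤ d` and `n_j > 0` for `0 ≤ j ≤ d-1`. -/
def ValidBlocks (bs : List (ℕ × ℕ)) : Prop :=
  bs ≠ [] ∧ (∀ p ∈ bs.tail, 0 < p.1) ∧ (∀ p ∈ bs.dropLast, 0 < p.2)

/-- A word on the alphabet {1,2}. -/
def IsBinary (w : List ℕ) : Prop := ∀ a ∈ w, a = 1 ∨ a = 2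

/-- The descent number of a word. -/
def des (w : List ℕ) : ℕ := (w.zip w.tail).countP fun p => decide (p.2 < p.1)

/-- The excedance number of a binary word with `k` ones: the number of
positions `i ≤ k` carrying the letter 2. -/
def exc (w : List ℕ) : ℕ := (w.take (w.count 1)).count 2

/-- `Ψ = Φ₁⁻¹` on binary words, via the descent-block decomposition. -/
def psiBlocks (bs : List (ℕ × ℕ)) : List ℕ :=
  List.replicate (bs.headD (0,0)).1 1
    ++ bs.tail.flatMap (fun p => 2 :: List.replicate (p.1 - 1) 1)
    ++ bs.dropLast.flatMap (fun p => List.replicate (p.2 - 1) 2 ++ [1])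
    ++ List.replicate (bs.getLastD (0,0)).2 2

def Psi (w : List ℕ) : List ℕ := psiBlocks (blocks w)

/-- Foata's second fundamental transformation on binary words. -/
def phi2Blocks (bs : List (ℕ × ℕ)) : List ℕ :=
  bs.tail.reverse.flatMap (fun p => List.replicate (p.1 - 1) 1 ++ [2])
    ++ List.replicate (bs.headD (0,0)).1 1
    ++ bs.dropLast.flatMap (fun p => List.replicate (p.2 - 1) 2 ++ [1])
    ++ List.replicate (bs.getLastD (0,0)).2 2

def Phi2 (w : List ℕ) : List ℕ := phi2Blocks (blocks w)

/-- The extended Steingrímsson map `Γ` on binary words. -/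
def gammaBlocks (bs : List (ℕ × ℕ)) : List ℕ :=
  match bs with
  | [] => []
  | [(m0, n0)] => List.replicate m0 1 ++ List.replicate n0 2
  | (m0, n0) :: rest =>
      List.replicate m0 1
        ++ rest.dropLast.flatMap (fun p => 2 :: List.replicate (p.1 - 1) 1)
        ++ (2 :: List.replicate (rest.getLastD (0,0)).1 1)
        ++ (let ns := n0 :: rest.map Prod.snd
            ns.dropLast.dropLast.flatMap (fun nj => List.replicate (nj - 1) 2 ++ [1])
              ++ List.replicate (ns.dropLast.getLastD 0 - 1 + ns.getLastD 0) 2)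

def Gamma (w : List ℕ) : List ℕ := gammaBlocks (blocks w)

/-- The involution `φ` on binary words. -/
def phi (w : List ℕ) : List ℕ :=
  let bs := blocks w
  let ns := bs.map Prod.snd
  let newms : List ℕ :=
    match (bs.map Prod.fst).reverse with
    | [] => []
    | [a] => [a]
    | a :: rest => (a - 1) :: (rest.dropLast ++ [rest.getLastD 0 + 1])
  blockWord (newms.zip ns)

/-- Fibonacci words: binary words with no two consecutive ones. -/
def IsFib (w : List ℕ) : Prop :=
  IsBinary w ∧ w.Chain' fun a b => ¬(a = 1 ∧ b = 1)

def FibSet (n : ℕ) : Set (List ℕ) := {w | IsFib w ∧ w.length = n}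

/-- Fibonacci words of length `n` ending with the letter 1. -/
def FibSet' (n : ℕ) : Set (List ℕ) :=
  {w | IsFib w ∧ w.length = n ∧ w.getLast? = some 1}

/-- Binary words of length `n` with no two consecutive twos. -/
def GSet (n : ℕ) : Set (List ℕ) :=
  {w | IsBinary w ∧ w.length = n ∧ w.Chain' fun a b => ¬(a = 2 ∧ b = 2)}

/-- The word `1^{m₀} 2^{d+n₀-1} 1 2^{n₁-1} ⋯ 1 2^{n_{d-1}-1} 1 2^{n_d}`. -/
def Rword (m0 : ℕ) (ns : List ℕ) : List ℕ :=
  match ns with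
  | [] => List.replicate m0 1
  | [n0] => List.replicate m0 1 ++ List.replicate n0 2
  | n0 :: rest =>
      List.replicate m0 1 ++ List.replicate (rest.length + n0 - 1) 2
        ++ rest.dropLast.flatMap (fun nj => 1 :: List.replicate (nj - 1) 2)
        ++ (1 :: List.replicate (rest.getLastD 0) 2)

def RSet (n : ℕ) : Set (List ℕ) :=
  {w | ∃ m0 ns, m0 ≤ 1 ∧ ns ≠ [] ∧ (∀ j ∈ List.dropLast ns, 1 ≤ j) ∧
        w = Rword m0 ns ∧ w.length = n}

/-- The Fibonacci word `1^{m₀} 2^{n₀} 1 2^{n₁} ⋯ 1 2^{n_d}`. -/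
def Fword (m0 : ℕ) (ns : List ℕ) : List ℕ :=
  List.replicate m0 1 ++ List.replicate (ns.headD 0) 2
    ++ ns.tail.flatMap fun nj => 1 :: List.replicate nj 2

/-
Every binary word is `2^{a₀} 1 2^{a₁} 1 ⋯ 1 2^{a_r}` for a unique nonempty list `(a₀, …, a_r)`
(`splitOn` and `intercalate` are mutually inverse). Such a word is a Fibonacci word iff the
interior `aᵢ` are positive, and its descents are the positions `i < r` with `aᵢ > 0`. Hence the
Fibonacci words of length `n` with `k` descents are exactly the words
`Fword m₀ [n₀, …, n_k] = 1^{m₀} 2^{n₀} 1 2^{n₁} ⋯ 1 2^{n_k}` with `m₀ ≤ 1`,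
`n₀, …, n_{k-1} ≥ 1` and `m₀ + k + ∑ nᵢ = n`, each obtained once.

The words `Rword m₀ ns` are indexed by the same data: `Rword m₀ ns` is `Fword m₀` of
`[k + n₀ - 1, n₁ - 1, …, n_{k-1} - 1, n_k]`, a change of exponents that is injective and keeps the
sum. Its first run of 2s has length at least `k` and it contains `m₀ + k` ones, so its excedance
number is automatically `k`.
-/

def twoRuns (as : List ℕ) : List ℕ := [1].intercalate (as.map (List.replicate · 2))

@[simp] lemma twoRuns_singleton (a : ℕ) : twoRuns [a] = List.replicate a 2 := by
  simp [twoRuns]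

lemma twoRuns_cons_cons (a b : ℕ) (l : List ℕ) :
    twoRuns (a :: b :: l) = List.replicate a 2 ++ 1 :: twoRuns (b :: l) := by
  simp [twoRuns, List.intercalate_cons_cons]

lemma twoRuns_succ_cons (a : ℕ) (l : List ℕ) :
    twoRuns ((a + 1) :: l) = 2 :: twoRuns (a :: l) := by
  cases l <;> simp [twoRuns_cons_cons, List.replicate_succ]

lemma twoRuns_zero_cons {l : List ℕ} (hl : l ≠ []) : twoRuns (0 :: l) = 1 :: twoRuns l := by
  obtain ⟨b, l, rfl⟩ := List.exists_cons_of_ne_nil hl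
  simp [twoRuns_cons_cons]

lemma twoRuns_injOn : Set.InjOn twoRuns {as | as ≠ []} := by
  intro as has as' has' h
  have hsplit : ∀ bs : List ℕ, bs ≠ [] → (twoRuns bs).splitOn 1 = bs.map (List.replicate · 2) :=
    fun bs hbs => List.splitOn_intercalate 1 (by simp) (by simpa using hbs)
  have := hsplit as has
  rw [h, hsplit as' has'] at this
  exact (List.map_injective_iff.mpr (List.replicate_left_injective 2) this).symm

lemma isBinary_twoRuns : ∀ as : List ℕ, IsBinary (twoRuns as)
  | [] => by simp [IsBinary, twoRuns]
  | [a] => by simp +contextual [IsBinary, List.mem_replicate]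
  | a :: b :: l => by
    intro x hx
    simp only [twoRuns_cons_cons, List.mem_append, List.mem_replicate, List.mem_cons] at hx
    rcases hx with hx | rfl | hx
    · exact .inr hx.2
    · exact .inl rfl
    · exact isBinary_twoRuns (b :: l) x hx

lemma exists_twoRuns_of_isBinary {w : List ℕ} (hw : IsBinary w) :
    ∃ as ≠ [], twoRuns as = w := by
  induction w with
  | nil => exact ⟨[0], by simp, rfl⟩
  | cons x w ih =>
    obtain ⟨as, has, rfl⟩ := ih fun y hy => hw y (List.mem_cons_of_mem x hy)
    rcases hw x List.mem_cons_self with rfl | rfl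
    · exact ⟨0 :: as, by simp, twoRuns_zero_cons has⟩
    · obtain ⟨a, l, rfl⟩ := List.exists_cons_of_ne_nil has
      exact ⟨(a + 1) :: l, by simp, twoRuns_succ_cons a l⟩

lemma isChain_replicate_two_append (a : ℕ) (l : List ℕ) :
    (List.replicate a 2 ++ l).IsChain (fun a b => ¬(a = 1 ∧ b = 1)) ↔
      l.IsChain (fun a b => ¬(a = 1 ∧ b = 1)) := by
  induction a with
  | zero => rfl
  | succ a ih => rw [List.replicate_succ, List.cons_append, List.isChain_cons, ih]; simp

lemma isChain_twoRuns_iff : ∀ as : List ℕ,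
    (twoRuns as).IsChain (fun a b => ¬(a = 1 ∧ b = 1)) ↔ ∀ a ∈ as.tail.dropLast, 1 ≤ a
  | [] => by simp [twoRuns]
  | [a] => by simpa using List.isChain_replicate_of_rel a (by simp)
  | a :: b :: l => by
    rw [twoRuns_cons_cons, isChain_replicate_two_append, List.isChain_cons,
      isChain_twoRuns_iff (b :: l)]
    rcases b with _ | b <;> rcases l with _ | ⟨c, l⟩ <;>
      simp [twoRuns_zero_cons, twoRuns_succ_cons]

lemma des_cons_cons (a b : ℕ) (l : List ℕ) :
    des (a :: b :: l) = (if b < a then 1 else 0) + des (b :: l) := by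
  simp only [des, List.tail_cons, List.zip_cons_cons, List.countP_cons, decide_eq_true_eq]
  omega

lemma des_replicate (n a : ℕ) : des (List.replicate n a) = 0 := by
  simp [des, List.tail_replicate]

lemma des_one_cons {l : List ℕ} (hl : ∀ x ∈ l, 1 ≤ x) : des (1 :: l) = des l := by
  cases l with
  | nil => rfl
  | cons b l =>
    have hb := hl b List.mem_cons_self
    rw [des_cons_cons, if_neg (by omega), zero_add]

lemma des_replicate_two_append_one (a : ℕ) {l : List ℕ} (hl : ∀ x ∈ l, 1 ≤ x) :
    des (List.replicate a 2 ++ 1 :: l) = (if 0 < a then 1 else 0) + des l := by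
  induction a with
  | zero => simp [des_one_cons hl]
  | succ a ih =>
    rcases a with _ | a
    · simp [des_cons_cons, des_one_cons hl]
    · rw [List.replicate_succ, List.cons_append, List.replicate_succ, List.cons_append,
        des_cons_cons, ← List.cons_append, ← List.replicate_succ, ih]
      simp

lemma des_twoRuns : ∀ as : List ℕ, des (twoRuns as) = as.dropLast.countP (0 < ·)
  | [] => rfl
  | [a] => by simp [des_replicate]
  | a :: b :: l => by
    have hpos : ∀ x ∈ twoRuns (b :: l), 1 ≤ x := fun x hx => by
      rcases isBinary_twoRuns _ x hx with rfl | rfl <;> norm_num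
    rw [twoRuns_cons_cons, des_replicate_two_append_one a hpos, des_twoRuns (b :: l),
      List.dropLast_cons_cons, List.countP_cons]
    simp [add_comm]

lemma Fword_zero_cons (a : ℕ) (l : List ℕ) : Fword 0 (a :: l) = twoRuns (a :: l) := by
  induction l generalizing a with
  | nil => simp [Fword]
  | cons b l ih =>
    rw [twoRuns_cons_cons, ← ih]
    simp [Fword]

lemma Fword_eq_twoRuns {m0 : ℕ} {ns : List ℕ} (hm : m0 ≤ 1) (hns : ns ≠ []) :
    Fword m0 ns = twoRuns (List.replicate m0 0 ++ ns) := by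
  obtain ⟨a, l, rfl⟩ := List.exists_cons_of_ne_nil hns
  interval_cases m0
  · exact Fword_zero_cons a l
  · rw [List.replicate_one, List.singleton_append, twoRuns_zero_cons hns, ← Fword_zero_cons]
    simp [Fword]

lemma length_Fword (m0 : ℕ) {ns : List ℕ} (hns : ns ≠ []) :
    (Fword m0 ns).length = m0 + (ns.length - 1) + ns.sum := by
  obtain ⟨a, l, rfl⟩ := List.exists_cons_of_ne_nil hns
  simp only [Fword, List.headD_cons, List.tail_cons, List.length_append, List.length_replicate,
    List.length_flatMap, List.length_cons, List.sum_map_add, List.sum_cons, List.map_id',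
    List.map_const', List.sum_replicate, smul_eq_mul, mul_one]
  omega

lemma isFib_Fword {m0 : ℕ} {ns : List ℕ} (hm : m0 ≤ 1) (hns : ns ≠ [])
    (hd : ∀ j ∈ ns.dropLast, 1 ≤ j) : IsFib (Fword m0 ns) := by
  rw [Fword_eq_twoRuns hm hns]
  refine ⟨isBinary_twoRuns _, (isChain_twoRuns_iff _).mpr fun a ha => hd a ?_⟩
  interval_cases m0
  · rw [List.replicate_zero, List.nil_append, ← List.tail_dropLast] at ha
    exact List.mem_of_mem_tail ha
  · simpa using ha

lemma des_Fword {m0 : ℕ} {ns : List ℕ} (hm : m0 ≤ 1) (hns : ns ≠ [])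
    (hd : ∀ j ∈ ns.dropLast, 1 ≤ j) : des (Fword m0 ns) = ns.length - 1 := by
  have hpos : ns.dropLast.countP (0 < ·) = ns.dropLast.length :=
    List.countP_eq_length.mpr fun j hj => decide_eq_true (hd j hj)
  rw [Fword_eq_twoRuns hm hns, des_twoRuns, List.dropLast_append_of_ne_nil hns,
    List.countP_append, hpos]
  simp

lemma exists_Fword_of_isFib {w : List ℕ} (hw : IsFib w) :
    ∃ m0 ns, m0 ≤ 1 ∧ ns ≠ [] ∧ (∀ j ∈ ns.dropLast, 1 ≤ j) ∧ Fword m0 ns = w := by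
  obtain ⟨as, has, rfl⟩ := exists_twoRuns_of_isBinary hw.1
  have hd := (isChain_twoRuns_iff as).mp hw.2
  match as, has, hd with
  | [a], _, _ => exact ⟨0, [a], zero_le_one, by simp, by simp, Fword_zero_cons a []⟩
  | 0 :: b :: l, _, hd =>
    exact ⟨1, b :: l, le_rfl, by simp, hd, Fword_eq_twoRuns le_rfl (by simp)⟩
  | (a + 1) :: b :: l, _, hd =>
    refine ⟨0, (a + 1) :: b :: l, zero_le_one, by simp, ?_, Fword_zero_cons _ _⟩
    simpa [List.dropLast_cons_cons] using hd

lemma Fword_inj {m0 m0' : ℕ} {ns ns' : List ℕ} (hm : m0 ≤ 1) (hm' : m0' ≤ 1) (hns : ns ≠ [])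
    (hlen : ns.length = ns'.length) (h : Fword m0 ns = Fword m0' ns') : m0 = m0' ∧ ns = ns' := by
  have hns' : ns' ≠ [] := List.ne_nil_of_length_pos (hlen ▸ List.length_pos_iff.mpr hns)
  rw [Fword_eq_twoRuns hm hns, Fword_eq_twoRuns hm' hns'] at h
  have h := twoRuns_injOn (by simp [hns]) (by simp [hns']) h
  obtain rfl : m0 = m0' := by simpa [hlen] using congrArg List.length h
  exact ⟨rfl, List.append_cancel_left h⟩

lemma exc_Fword (m0 : ℕ) {ns : List ℕ} (h : ns.length - 1 ≤ ns.headD 0) :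
    exc (Fword m0 ns) = ns.length - 1 := by
  cases ns with
  | nil => simp [exc, Fword, List.count_replicate]
  | cons a l =>
    have hl : l.length ≤ a := by simpa using h
    have hcount : (Fword m0 (a :: l)).count 1 = m0 + l.length := by
      simp [Fword, List.count_flatMap, List.count_replicate, Function.comp_def]
    rw [exc, hcount, Fword, List.append_assoc, List.take_append,
      List.take_append_of_le_length (by simpa using hl)]
    simp [List.count_replicate, List.take_replicate, hl]

def rwordExponents : List ℕ → List ℕ
  | [] => []
  | [n0] => [n0]
  | n0 :: rest => (rest.length + n0 - 1) :: (rest.dropLast.map (· - 1) ++ [rest.getLastD 0])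

lemma Rword_eq_Fword (m0 : ℕ) : ∀ ns : List ℕ, Rword m0 ns = Fword m0 (rwordExponents ns)
  | [] => by simp [Rword, rwordExponents, Fword]
  | [n0] => by simp [Rword, rwordExponents, Fword]
  | n0 :: b :: rest => by
    simp only [Rword, rwordExponents, Fword, List.headD_cons, List.tail_cons,
      List.flatMap_append, List.flatMap_map]
    simp

lemma rwordExponents_cons_concat (n0 : ℕ) (mid : List ℕ) (x : ℕ) :
    rwordExponents (n0 :: (mid ++ [x])) = (mid.length + n0) :: (mid.map (· - 1) ++ [x]) := by
  cases mid with
  | nil => simp [rwordExponents]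
  | cons a mid =>
    simp only [rwordExponents, List.cons_append]
    rw [← List.cons_append (a := a) (as := mid) (bs := [x]), List.dropLast_concat,
      List.getLastD_concat]
    simp

lemma length_rwordExponents : ∀ ns : List ℕ, (rwordExponents ns).length = ns.length
  | [] | [_] => rfl
  | _ :: _ :: _ => by simp [rwordExponents]

lemma sum_map_pred_add_length {l : List ℕ} (hl : ∀ j ∈ l, 1 ≤ j) :
    (l.map (· - 1)).sum + l.length = l.sum := by
  induction l with
  | nil => rfl
  | cons a l ih =>
    have ha := hl a List.mem_cons_self
    have := ih fun j hj => hl j (List.mem_cons_of_mem a hj)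
    simp only [List.map_cons, List.sum_cons, List.length_cons]
    omega

lemma map_pred_injOn : Set.InjOn (List.map (· - 1)) {l : List ℕ | ∀ j ∈ l, 1 ≤ j} :=
  Set.LeftInvOn.injOn (f₁' := List.map (· + 1)) fun l hl => by
    rw [List.map_map]
    conv_rhs => rw [← List.map_id l]
    exact List.map_congr_left fun j hj => Nat.sub_add_cancel (hl j hj)

lemma cases_of_forall_dropLast_pos {ns : List ℕ} (hd : ∀ j ∈ ns.dropLast, 1 ≤ j) :
    ns = [] ∨ (∃ n0, ns = [n0]) ∨
      ∃ n0 mid x, ns = n0 :: (mid ++ [x]) ∧ 1 ≤ n0 ∧ ∀ j ∈ mid, 1 ≤ j := by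
  rcases ns with _ | ⟨n0, rest⟩
  · exact .inl rfl
  rcases rest.eq_nil_or_concat' with rfl | ⟨mid, x, rfl⟩
  · exact .inr (.inl ⟨n0, rfl⟩)
  rw [← List.cons_append, List.dropLast_concat] at hd
  exact .inr (.inr ⟨n0, mid, x, rfl, hd n0 List.mem_cons_self,
    fun j hj => hd j (List.mem_cons_of_mem n0 hj)⟩)

lemma sum_rwordExponents {ns : List ℕ} (hd : ∀ j ∈ ns.dropLast, 1 ≤ j) :
    (rwordExponents ns).sum = ns.sum := by
  rcases cases_of_forall_dropLast_pos hd with rfl | ⟨n0, rfl⟩ | ⟨n0, mid, x, rfl, -, hmid⟩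
  · rfl
  · rfl
  · have := sum_map_pred_add_length hmid
    simp only [rwordExponents_cons_concat, List.sum_cons, List.sum_append]
    omega

lemma length_sub_one_le_headD_rwordExponents {ns : List ℕ} (hd : ∀ j ∈ ns.dropLast, 1 ≤ j) :
    ns.length - 1 ≤ (rwordExponents ns).headD 0 := by
  rcases cases_of_forall_dropLast_pos hd with rfl | ⟨n0, rfl⟩ | ⟨n0, mid, x, rfl, hn0, -⟩
  · simp
  · simp
  · rw [rwordExponents_cons_concat, List.headD_cons, List.length_cons, List.length_append,
      List.length_singleton]
    omega

lemma rwordExponents_injOn : Set.InjOn rwordExponents {ns | ∀ j ∈ ns.dropLast, 1 ≤ j} := by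
  intro ns hd ns' hd' h
  have hlen := congrArg List.length h
  simp only [length_rwordExponents] at hlen
  rcases cases_of_forall_dropLast_pos hd with rfl | ⟨n0, rfl⟩ | ⟨n0, mid, x, rfl, -, hmid⟩ <;>
  rcases cases_of_forall_dropLast_pos hd' with rfl | ⟨n0', rfl⟩ | ⟨n0', mid', x', rfl, -, hmid'⟩ <;>
  simp only [List.length_nil, List.length_cons, List.length_append] at hlen <;> try omega
  · exact h
  · exact h
  · simp only [rwordExponents_cons_concat, List.cons.injEq] at h
    obtain ⟨hhead, htail⟩ := h
    obtain ⟨hmap, hx⟩ := List.append_inj' htail rfl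
    obtain rfl := map_pred_injOn hmid hmid' hmap
    obtain rfl : n0 = n0' := by omega
    rw [List.singleton_inj.mp hx]

lemma rwordExponents_ne_nil {ns : List ℕ} (hns : ns ≠ []) : rwordExponents ns ≠ [] := by
  rwa [← List.length_pos_iff, length_rwordExponents, List.length_pos_iff]

lemma length_Rword (m0 : ℕ) {ns : List ℕ} (hns : ns ≠ []) (hd : ∀ j ∈ ns.dropLast, 1 ≤ j) :
    (Rword m0 ns).length = m0 + (ns.length - 1) + ns.sum := by
  rw [Rword_eq_Fword, length_Fword m0 (rwordExponents_ne_nil hns), length_rwordExponents,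
    sum_rwordExponents hd]

lemma exc_Rword (m0 : ℕ) {ns : List ℕ} (hd : ∀ j ∈ ns.dropLast, 1 ≤ j) :
    exc (Rword m0 ns) = ns.length - 1 := by
  have h := length_sub_one_le_headD_rwordExponents hd
  rw [← length_rwordExponents] at h
  rw [Rword_eq_Fword, exc_Fword m0 h, length_rwordExponents]

lemma Rword_inj {m0 m0' : ℕ} {ns ns' : List ℕ} (hm : m0 ≤ 1) (hm' : m0' ≤ 1) (hns : ns ≠ [])
    (hd : ∀ j ∈ ns.dropLast, 1 ≤ j) (hd' : ∀ j ∈ ns'.dropLast, 1 ≤ j)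
    (hlen : ns.length = ns'.length) (h : Rword m0 ns = Rword m0' ns') : m0 = m0' ∧ ns = ns' := by
  rw [Rword_eq_Fword, Rword_eq_Fword] at h
  obtain ⟨rfl, hexp⟩ := Fword_inj hm hm' (rwordExponents_ne_nil hns)
    (by simp only [length_rwordExponents, hlen]) h
  exact ⟨rfl, rwordExponents_injOn hd hd' hexp⟩

def exponentData (n k : ℕ) : Set (ℕ × List ℕ) :=
  {p | p.1 ≤ 1 ∧ p.2.length = k + 1 ∧ (∀ j ∈ p.2.dropLast, 1 ≤ j) ∧ p.1 + k + p.2.sum = n}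

lemma setOf_isFib_des_eq_image (n k : ℕ) :
    {w | IsFib w ∧ w.length = n ∧ des w = k} =
      (fun p : ℕ × List ℕ => Fword p.1 p.2) '' exponentData n k := by
  ext w
  constructor
  · rintro ⟨hw, rfl, rfl⟩
    obtain ⟨m0, ns, hm, hns, hd, rfl⟩ := exists_Fword_of_isFib hw
    have hpos := List.length_pos_iff.mpr hns
    have hdes := des_Fword hm hns hd
    have hlen := length_Fword m0 hns
    exact ⟨(m0, ns), ⟨hm, by dsimp only; omega, hd, by dsimp only; omega⟩, rfl⟩
  · rintro ⟨⟨m0, ns⟩, ⟨hm, hlen, hd, hsum⟩, rfl⟩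
    dsimp only at hm hlen hd hsum ⊢
    have hns : ns ≠ [] := List.ne_nil_of_length_eq_add_one hlen
    have hdes := des_Fword hm hns hd
    have hlenF := length_Fword m0 hns
    exact ⟨isFib_Fword hm hns hd, by omega, by omega⟩

lemma injOn_Fword (n k : ℕ) :
    Set.InjOn (fun p : ℕ × List ℕ => Fword p.1 p.2) (exponentData n k) := by
  rintro ⟨m0, ns⟩ ⟨hm, hlen, -⟩ ⟨m0', ns'⟩ ⟨hm', hlen', -⟩ h
  obtain ⟨rfl, rfl⟩ := Fword_inj hm hm' (List.ne_nil_of_length_eq_add_one hlen)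
    (hlen.trans hlen'.symm) h
  rfl

lemma setOf_Rword_exc_eq_image (n k : ℕ) :
    {w | (∃ m0 ns, m0 ≤ 1 ∧ ns.length = k + 1 ∧ (∀ j ∈ List.dropLast ns, 1 ≤ j) ∧
        w = Rword m0 ns) ∧ w.length = n ∧ exc w = k} =
      (fun p : ℕ × List ℕ => Rword p.1 p.2) '' exponentData n k := by
  ext w
  constructor
  · rintro ⟨⟨m0, ns, hm, hlen, hd, rfl⟩, hn, -⟩
    rw [length_Rword m0 (List.ne_nil_of_length_eq_add_one hlen) hd] at hn
    exact ⟨(m0, ns), ⟨hm, hlen, hd, by dsimp only; omega⟩, rfl⟩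
  · rintro ⟨⟨m0, ns⟩, ⟨hm, hlen, hd, hsum⟩, rfl⟩
    dsimp only at hm hlen hd hsum ⊢
    refine ⟨⟨m0, ns, hm, hlen, hd, rfl⟩, ?_, ?_⟩
    · rw [length_Rword m0 (List.ne_nil_of_length_eq_add_one hlen) hd]
      omega
    · rw [exc_Rword m0 hd]
      omega

lemma injOn_Rword (n k : ℕ) :
    Set.InjOn (fun p : ℕ × List ℕ => Rword p.1 p.2) (exponentData n k) := by
  rintro ⟨m0, ns⟩ ⟨hm, hlen, hd, -⟩ ⟨m0', ns'⟩ ⟨hm', hlen', hd', -⟩ h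
  obtain ⟨rfl, rfl⟩ := Rword_inj hm hm' (List.ne_nil_of_length_eq_add_one hlen) hd hd'
    (hlen.trans hlen'.symm) h
  rfl

theorem stmt_8 (n k : ℕ) :
    {w | IsFib w ∧ w.length = n ∧ des w = k}.ncard =
      {w | (∃ m0 ns, m0 ≤ 1 ∧ ns.length = k + 1 ∧
              (∀ j ∈ List.dropLast ns, 1 ≤ j) ∧ w = Rword m0 ns) ∧
            w.length = n ∧ exc w = k}.ncard := by
  rw [setOf_isFib_des_eq_image, setOf_Rword_exc_eq_image, (injOn_Fword n k).ncard_image,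
    (injOn_Rword n k).ncard_image]
end

section
/- Let Γ be the map on binary words given by Γ(1^{m_0} 2^{n_0} ⋯ 1^{m_d} 2^{n_d}) = 1^{m_0} 2 1^{m_1−1} ⋯ 2 1^{m_{d−1}−1} 2 1^{m_d} 2^{n_0−1} 1 2^{n_1−1} ⋯ 2^{n_{d−2}−1} 1 2^{n_{d−1}−1+n_d}. Then Γ restricted to F'_n, the set of Fibonacci words of length n ending with 1, is injective. -/
/-! A Fibonacci word ending in 1 has the shape `1^{m₀} 2^{k₀+1} 1 ⋯ 2^{k_{r-1}+1} 1`, so its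
descent blocks are `(m₀, k₀+1), (1, k₁+1), …, (1, k_{r-1}+1), (1, 0)`. Feeding these into the
definition of `Γ` gives the Fibonacci word `1^{m₀} 2^r 1 2^{k₀} ⋯ 1 2^{k_{r-1}}`, from which
`m₀`, `r` and the `kᵢ` are read off by counting runs. -/

theorem cons_flatMap_append_singleton {α β : Type*} (a : β) (f : α → List β) (l : List α) :
    a :: l.flatMap (fun x => f x ++ [a]) = l.flatMap (fun x => a :: f x) ++ [a] := by
  induction l with
  | nil => rfl
  | cons x l ih => simp [ih]

theorem flatMap_dropLast_append_getLastD {α β : Type*} (a : β) (f : α → List β) (x : α)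
    (l : List α) :
    (x :: l).dropLast.flatMap (fun y => f y ++ [a]) ++ f (l.getLastD x) =
      f x ++ l.flatMap (fun y => a :: f y) := by
  induction l generalizing x with
  | nil => simp
  | cons y l ih =>
    rw [List.dropLast_cons_of_ne_nil (List.cons_ne_nil y l), List.getLastD_cons, List.flatMap_cons,
      List.append_assoc, ih]
    simp

theorem leadCount_replicate_append (a m : ℕ) {w : List ℕ} (hw : w.head? ≠ some a) :
    leadCount a (List.replicate m a ++ w) = (m, w) := by
  induction m with
  | zero =>
    cases w with
    | nil => rfl
    | cons b t => simp_all [leadCount]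
  | succ m ih => simp [List.replicate_succ, leadCount, ih]

theorem replicate_append_inj {a m m' : ℕ} {w w' : List ℕ} (hw : w.head? ≠ some a)
    (hw' : w'.head? ≠ some a) (h : List.replicate m a ++ w = List.replicate m' a ++ w') :
    m = m' ∧ w = w' := by
  have h := congrArg (leadCount a) h
  rw [leadCount_replicate_append a m hw, leadCount_replicate_append a m' hw'] at h
  exact Prod.ext_iff.mp h

theorem blocksAux_nil (fuel : ℕ) : blocksAux fuel [] = [] := by
  cases fuel <;> rfl

theorem blocksAux_replicate_append {fuel m n : ℕ} {w : List ℕ}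
    (hne : List.replicate m 1 ++ List.replicate n 2 ++ w ≠ [])
    (h1 : (List.replicate n 2 ++ w).head? ≠ some 1) (h2 : w.head? ≠ some 2) :
    blocksAux (fuel + 1) (List.replicate m 1 ++ List.replicate n 2 ++ w) =
      (m, n) :: blocksAux fuel w := by
  obtain ⟨b, t, hbt⟩ := List.exists_cons_of_ne_nil hne
  rw [hbt, blocksAux, ← hbt, List.append_assoc, leadCount_replicate_append 1 m h1,
    leadCount_replicate_append 2 n h2]
  exact List.cons_ne_nil b t

@[simp]
theorem blockWord_cons (p : ℕ × ℕ) (bs : List (ℕ × ℕ)) :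
    blockWord (p :: bs) = List.replicate p.1 1 ++ List.replicate p.2 2 ++ blockWord bs := by
  simp [blockWord]

theorem blocksAux_blockWord :
    ∀ (bs : List (ℕ × ℕ)) (fuel : ℕ), ValidBlocks bs → blockWord bs ≠ [] →
      (blockWord bs).length ≤ fuel → blocksAux fuel (blockWord bs) = bs
  | [], _, hv, _, _ => absurd rfl hv.1
  | [p], fuel, _, hne, hfuel => by
    obtain ⟨fuel, rfl⟩ := Nat.exists_add_one_eq.mpr (List.length_pos_iff.mpr hne |>.trans_le hfuel)
    have hw : blockWord [p] = List.replicate p.1 1 ++ List.replicate p.2 2 ++ [] := by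
      simp [blockWord]
    rw [hw] at hne ⊢
    rw [blocksAux_replicate_append hne (by cases p.2 <;> simp [List.replicate_succ]) (by simp),
      blocksAux_nil]
  | p :: q :: bs, fuel, ⟨_, htail, hdrop⟩, hne, hfuel => by
    obtain ⟨fuel, rfl⟩ := Nat.exists_add_one_eq.mpr (List.length_pos_iff.mpr hne |>.trans_le hfuel)
    have hq : 0 < q.1 := htail q (by simp)
    have hp : 0 < p.2 := hdrop p (by simp)
    have hv : ValidBlocks (q :: bs) :=
      ⟨List.cons_ne_nil _ _, fun r hr => htail r (by simp_all),
        fun r hr => hdrop r <|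
          List.mem_of_mem_tail (by simpa [List.dropLast_cons_of_ne_nil] using hr)⟩
    obtain ⟨i, hi⟩ := Nat.exists_add_one_eq.mpr hp
    obtain ⟨j, hj⟩ := Nat.exists_add_one_eq.mpr hq
    have hwq : blockWord (q :: bs) =
        1 :: (List.replicate j 1 ++ List.replicate q.2 2 ++ blockWord bs) := by
      simp [← hj, List.replicate_succ]
    rw [blockWord_cons p] at hne hfuel ⊢
    rw [blocksAux_replicate_append hne (by simp [← hi, List.replicate_succ]) (by simp [hwq]),
      blocksAux_blockWord (q :: bs) fuel hv (by simp [hwq]) (by simp [hwq] at hfuel ⊢; omega)]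

theorem blocks_blockWord {bs : List (ℕ × ℕ)} (hv : ValidBlocks bs) (hne : blockWord bs ≠ []) :
    blocks (blockWord bs) = bs :=
  blocksAux_blockWord bs _ hv hne le_rfl

def fibWord' (m0 : ℕ) (ks : List ℕ) : List ℕ :=
  List.replicate m0 1 ++ ks.flatMap fun k => List.replicate (k + 1) 2 ++ [1]

theorem fibWord'_zero_cons (k : ℕ) (ks : List ℕ) :
    fibWord' 0 (k :: ks) = List.replicate (k + 1) 2 ++ fibWord' 1 ks := by
  simp [fibWord']

theorem exists_eq_fibWord' :
    ∀ w : List ℕ, IsFib w → w.getLast? = some 1 → ∃ m0 ≤ 1, ∃ ks, w = fibWord' m0 ks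
  | [], _, h => by simp at h
  | [a], _, h => ⟨1, le_rfl, [], by simp_all [fibWord']⟩
  | a :: b :: t, ⟨hbin, hchain⟩, hlast => by
    obtain ⟨hab, hchain⟩ := List.isChain_cons_cons.mp hchain
    obtain ⟨m0, hm0, ks, hw⟩ := exists_eq_fibWord' (b :: t)
      ⟨fun x hx => hbin x (List.mem_cons_of_mem a hx), hchain⟩
      (by rwa [List.getLast?_cons_cons] at hlast)
    rcases hbin a (by simp) with rfl | rfl
    · obtain rfl : m0 = 0 := by
        by_contra hm
        obtain rfl : m0 = 1 := by omega
        simp only [fibWord', List.replicate_one, List.cons_append, List.cons.injEq] at hw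
        exact hab ⟨rfl, hw.1⟩
      exact ⟨1, le_rfl, ks, by simp [hw, fibWord']⟩
    · interval_cases m0
      · obtain ⟨k, ks, rfl⟩ : ∃ k ks', ks = k :: ks' := by
          cases ks <;> simp_all [fibWord']
        exact ⟨0, zero_le_one, (k + 1) :: ks, by
          rw [hw, fibWord'_zero_cons, fibWord'_zero_cons, List.replicate_succ]; rfl⟩
      · exact ⟨0, zero_le_one, 0 :: ks, by rw [hw, fibWord'_zero_cons]; rfl⟩

def fibBlocks (m0 : ℕ) : List ℕ → List (ℕ × ℕ)
  | [] => [(m0, 0)]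
  | k :: ks => (m0, k + 1) :: ((ks.map fun k => (1, k + 1)) ++ [(1, 0)])

theorem blockWord_fibBlocks (m0 : ℕ) (ks : List ℕ) :
    blockWord (fibBlocks m0 ks) = fibWord' m0 ks := by
  cases ks with
  | nil => simp [fibBlocks, fibWord', blockWord]
  | cons k ks =>
    simp [fibBlocks, fibWord', blockWord, List.flatMap_map, ← cons_flatMap_append_singleton]

theorem validBlocks_fibBlocks (m0 : ℕ) (ks : List ℕ) : ValidBlocks (fibBlocks m0 ks) := by
  cases ks with
  | nil => simp [ValidBlocks, fibBlocks]
  | cons k ks =>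
    simp only [ValidBlocks, fibBlocks, ← List.cons_append, List.dropLast_concat]
    simp only [ne_eq, List.mem_map, List.mem_cons]
    grind

theorem blocks_fibWord' {m0 : ℕ} {ks : List ℕ} (h : fibWord' m0 ks ≠ []) :
    blocks (fibWord' m0 ks) = fibBlocks m0 ks := by
  rw [← blockWord_fibBlocks] at h ⊢
  exact blocks_blockWord (validBlocks_fibBlocks m0 ks) h

theorem gammaBlocks_cons_of_ne_nil (m0 n0 : ℕ) {rest : List (ℕ × ℕ)} (h : rest ≠ []) :
    gammaBlocks ((m0, n0) :: rest) =
      List.replicate m0 1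
        ++ rest.dropLast.flatMap (fun p => 2 :: List.replicate (p.1 - 1) 1)
        ++ (2 :: List.replicate (rest.getLastD (0,0)).1 1)
        ++ (let ns := n0 :: rest.map Prod.snd
            ns.dropLast.dropLast.flatMap (fun nj => List.replicate (nj - 1) 2 ++ [1])
              ++ List.replicate (ns.dropLast.getLastD 0 - 1 + ns.getLastD 0) 2) := by
  obtain ⟨b, t, rfl⟩ := List.exists_cons_of_ne_nil h
  rfl

theorem gammaBlocks_fibBlocks (m0 : ℕ) (ks : List ℕ) :
    gammaBlocks (fibBlocks m0 ks) = Fword m0 (ks.length :: ks) := by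
  cases ks with
  | nil => simp [fibBlocks, gammaBlocks, Fword]
  | cons k ks =>
    have hns : (k + 1) :: ((ks.map fun k => (1, k + 1)) ++ [(1, 0)]).map Prod.snd
        = (k :: ks).map (· + 1) ++ [0] := by simp
    rw [fibBlocks, gammaBlocks_cons_of_ne_nil _ _ (by simp)]
    simp only [hns, List.dropLast_concat, List.getLastD_concat, ← List.map_dropLast,
      List.flatMap_map]
    rw [List.map_cons, List.getLastD_cons, List.getLastD_map]
    simp only [Nat.add_sub_cancel, add_zero]
    rw [flatMap_dropLast_append_getLastD 1 (fun a => List.replicate a 2)]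
    simp [Fword, List.replicate_succ', List.eq_replicate_iff]

theorem Gamma_fibWord' {m0 : ℕ} {ks : List ℕ} (h : fibWord' m0 ks ≠ []) :
    Gamma (fibWord' m0 ks) = Fword m0 (ks.length :: ks) := by
  rw [Gamma, blocks_fibWord' h, gammaBlocks_fibBlocks]

theorem head?_flatMap_one_cons_ne_two (ks : List ℕ) :
    (ks.flatMap fun k => 1 :: List.replicate k 2).head? ≠ some 2 := by
  cases ks <;> simp

theorem flatMap_one_cons_replicate_injective :
    Function.Injective fun ks : List ℕ => ks.flatMap fun k => 1 :: List.replicate k 2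
  | [], [], _ => rfl
  | [], _ :: _, h | _ :: _, [], h => by simp at h
  | k :: ks, k' :: ks', h => by
    simp only [List.flatMap_cons, List.cons_append, List.cons.injEq, true_and] at h
    obtain ⟨rfl, htail⟩ := replicate_append_inj (head?_flatMap_one_cons_ne_two ks)
      (head?_flatMap_one_cons_ne_two ks') h
    rw [flatMap_one_cons_replicate_injective htail]

theorem Fword_length_cons_inj {m0 m0' : ℕ} {ks ks' : List ℕ}
    (h : Fword m0 (ks.length :: ks) = Fword m0' (ks'.length :: ks')) : m0 = m0' ∧ ks = ks' := by
  have head?_ne_one (ks : List ℕ) :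
      (List.replicate ks.length 2 ++ ks.flatMap fun k => 1 :: List.replicate k 2).head? ≠
        some 1 := by
    cases ks <;> simp [List.replicate_succ]
  simp only [Fword, List.headD_cons, List.tail_cons, List.append_assoc] at h
  obtain ⟨rfl, hrest⟩ := replicate_append_inj (head?_ne_one ks) (head?_ne_one ks') h
  obtain ⟨-, htail⟩ := replicate_append_inj (head?_flatMap_one_cons_ne_two ks)
    (head?_flatMap_one_cons_ne_two ks') hrest
  exact ⟨rfl, flatMap_one_cons_replicate_injective htail⟩

theorem stmt_11 (n : ℕ) :
    Set.InjOn Gamma (FibSet' n) := by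
  intro w ⟨hw, _, hlast⟩ w' ⟨hw', _, hlast'⟩ h
  have hne {u : List ℕ} (hu : u.getLast? = some 1) : u ≠ [] := by rintro rfl; simp at hu
  obtain ⟨m0, -, ks, rfl⟩ := exists_eq_fibWord' w hw hlast
  obtain ⟨m0', -, ks', rfl⟩ := exists_eq_fibWord' w' hw' hlast'
  rw [Gamma_fibWord' (hne hlast), Gamma_fibWord' (hne hlast')] at h
  obtain ⟨rfl, rfl⟩ := Fword_length_cons_inj h
  rfl
end
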